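/- Let n be a positive integer, let A and ρ be n×n positive definite complex matrices, let s > 0, and let K be an n×n skew-Hermitian matrix (K* = −K). Set X = A^{1/2} ρ A^{1/2}, Y = (X + sI)⁻¹, and T = ρ A^{1/2} Y ρ Y + Y ρ Y A^{1/2} ρ. Then the function t ↦ Tr[ ρ ( (e^{-tK} A^{1/2} e^{tK}) ρ (e^{-tK} A^{1/2} e^{tK}) + sI )⁻¹ ] is differentiable at t = 0 with derivative equal to −Tr( K (T A^{1/2} − A^{1/2} T) ), i.e. Tr( K (A^{1/2} T − T A^{1/2}) ). -/

import Mathlib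

/-!
Extend `t` to a complex variable `z` and write `a = A^{1/2}`. At `z = 0` the conjugate
`e^{-zK} a e^{zK}` has derivative `[a, K]`, so `M(z) = (e^{-zK} a e^{zK}) ρ (e^{-zK} a e^{zK}) + sI`
has derivative `M' = [a, K] ρ a + a ρ [a, K]` and `M(z)⁻¹` has derivative `-Y M' Y`. Cyclicity of
the trace turns `Tr(ρ Y M' Y)` into `Tr(K (T a - a T))`, and the complex derivative restricts to
the real line.
-/

open Matrix
open scoped ComplexOrder Classical

/-- The positive semidefinite square root of a matrix (junk value `0` if the matrix is
not positive semidefinite). -/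
noncomputable def msqrt {n : ℕ} (A : Matrix (Fin n) (Fin n) ℂ) : Matrix (Fin n) (Fin n) ℂ :=
  if h : A.PosSemidef then
    (h.1.eigenvectorUnitary : Matrix (Fin n) (Fin n) ℂ) *
      diagonal ((↑) ∘ (Real.sqrt ·) ∘ h.1.eigenvalues) *
      (star h.1.eigenvectorUnitary : Matrix (Fin n) (Fin n) ℂ)
  else 0

section NormedAlgebra

variable {𝔸 : Type*} [NormedRing 𝔸] [NormedAlgebra ℂ 𝔸] [CompleteSpace 𝔸]

theorem hasDerivAt_exp_conj_zero (K a : 𝔸) :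
    HasDerivAt (fun z : ℂ => NormedSpace.exp (-z • K) * a * NormedSpace.exp (z • K))
      (a * K - K * a) 0 := by
  have hneg : HasDerivAt (fun z : ℂ => NormedSpace.exp (-z • K)) (-K) 0 := by
    simpa [neg_smul, ← smul_neg] using hasDerivAt_exp_smul_const (-K) (0 : ℂ)
  have hpos : HasDerivAt (fun z : ℂ => NormedSpace.exp (z • K)) K 0 := by
    simpa using hasDerivAt_exp_smul_const K (0 : ℂ)
  refine ((hneg.mul_const a).fun_mul hpos).congr_deriv ?_
  simp only [neg_zero, zero_smul, NormedSpace.exp_zero, one_mul, mul_one]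
  noncomm_ring

end NormedAlgebra

theorem HasDerivAt.ringInverse {𝕜 R : Type*} [NontriviallyNormedField 𝕜] [NormedRing R]
    [HasSummableGeomSeries R] [NormedAlgebra 𝕜 R] {f : 𝕜 → R} {f' : R} {x : 𝕜} {u : Rˣ}
    (hf : HasDerivAt f f' x) (hu : f x = u) :
    HasDerivAt (fun t => Ring.inverse (f t)) (-(↑u⁻¹ * f' * ↑u⁻¹)) x := by
  have := (hu ▸ hasFDerivAt_ringInverse (𝕜 := 𝕜) u).comp_hasDerivAt x hf
  simpa [Function.comp_def, mul_assoc] using this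

section MatrixCalculus

-- Matrix calculus needs some normed-algebra structure; all norms give the same derivatives.
attribute [local instance] Matrix.linftyOpNormedRing Matrix.linftyOpNormedAlgebra

variable {m 𝕜 : Type*} [Fintype m] [RCLike 𝕜]

theorem HasDerivAt.trace_mul_left {f : 𝕜 → Matrix m m 𝕜} {f' : Matrix m m 𝕜} {x : 𝕜}
    (ρ : Matrix m m 𝕜) (hf : HasDerivAt f f' x) :
    HasDerivAt (fun t => (ρ * f t).trace) (ρ * f').trace x :=
  (LinearMap.toContinuousLinearMap
    ((traceLinearMap m 𝕜 𝕜).comp (LinearMap.mulLeft 𝕜 ρ))).hasFDerivAt.comp_hasDerivAt x hf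

theorem hasDerivAt_trace_mul_inv_conj_exp [DecidableEq m] (ρ a K : Matrix m m ℂ) (c : ℂ)
    (hu : IsUnit (a * ρ * a + c • 1)) :
    HasDerivAt
      (fun z : ℂ => (ρ * ((NormedSpace.exp (-z • K) * a * NormedSpace.exp (z • K)) * ρ *
        (NormedSpace.exp (-z • K) * a * NormedSpace.exp (z • K)) + c • 1)⁻¹).trace)
      (-(ρ * ((a * ρ * a + c • 1)⁻¹ * ((a * K - K * a) * ρ * a + a * ρ * (a * K - K * a)) *
        (a * ρ * a + c • 1)⁻¹)).trace) 0 := by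
  obtain ⟨u, hu⟩ := hu
  have hconj := hasDerivAt_exp_conj_zero K a
  have hM := ((hconj.mul_const ρ).fun_mul hconj).add_const (c • (1 : Matrix m m ℂ))
  simp only [neg_zero, zero_smul, NormedSpace.exp_zero, one_mul, mul_one] at hM
  have := (hM.ringInverse (u := u) (by simp [hu])).trace_mul_left ρ
  simp_rw [nonsing_inv_eq_ringInverse, ← hu, Ring.inverse_unit]
  rw [mul_neg, trace_neg] at this
  exact this

end MatrixCalculus

theorem trace_sandwich_commutator_eq_trace_mul_commutator {m R : Type*} [Fintype m] [CommRing R]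
    (ρ a K Y : Matrix m m R) :
    (ρ * (Y * ((a * K - K * a) * ρ * a + a * ρ * (a * K - K * a)) * Y)).trace =
      (K * ((ρ * a * Y * ρ * Y + Y * ρ * Y * a * ρ) * a -
        a * (ρ * a * Y * ρ * Y + Y * ρ * Y * a * ρ))).trace := by
  have cyc : ∀ P Q : Matrix m m R, (P * (K * Q)).trace = (K * (Q * P)).trace := fun P Q => by
    rw [trace_mul_comm, Matrix.mul_assoc]
  calc _ = (ρ * Y * a * (K * (ρ * a * Y))).trace - (ρ * Y * (K * (a * ρ * a * Y))).trace +
          (ρ * Y * a * ρ * a * (K * Y)).trace - (ρ * Y * a * ρ * (K * (a * Y))).trace := by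
        simp only [← trace_sub, ← trace_add]; congr 1; noncomm_ring
    _ = (K * (ρ * a * Y * (ρ * Y * a))).trace - (K * (a * ρ * a * Y * (ρ * Y))).trace +
          (K * (Y * (ρ * Y * a * ρ * a))).trace - (K * (a * Y * (ρ * Y * a * ρ))).trace := by
        simp only [cyc]
    _ = _ := by simp only [← trace_sub, ← trace_add]; congr 1; noncomm_ring

theorem isHermitian_msqrt {n : ℕ} {A : Matrix (Fin n) (Fin n) ℂ} (hA : A.PosSemidef) :
    (msqrt A).IsHermitian := by
  rw [IsHermitian, msqrt, dif_pos hA, conjTranspose_mul, conjTranspose_mul,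
    diagonal_conjTranspose]
  simp [Matrix.mul_assoc, ← Matrix.star_eq_conjTranspose, Pi.star_def, Function.comp_def,
    Complex.conj_ofReal]

theorem stmt12_general (n : ℕ)
    (A ρ : Matrix (Fin n) (Fin n) ℂ)
    (hA : A.PosDef) (hρ : ρ.PosDef)
    (s : ℝ) (hs : 0 < s)
    (K : Matrix (Fin n) (Fin n) ℂ)
    (X Y T : Matrix (Fin n) (Fin n) ℂ)
    (hX : X = msqrt A * ρ * msqrt A)
    (hY : Y = (X + (s : ℂ) • 1)⁻¹)
    (hT : T = ρ * msqrt A * Y * ρ * Y + Y * ρ * Y * msqrt A * ρ) :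
    HasDerivAt
      (fun t : ℝ =>
        (ρ * ((NormedSpace.exp (-(t : ℂ) • K) * msqrt A * NormedSpace.exp ((t : ℂ) • K)) * ρ *
              (NormedSpace.exp (-(t : ℂ) • K) * msqrt A * NormedSpace.exp ((t : ℂ) • K)) +
            (s : ℂ) • 1)⁻¹).trace)
      (-((K * (T * msqrt A - msqrt A * T)).trace)) 0 := by
  have hXpsd : X.PosSemidef := by
    have h := hρ.posSemidef.conjTranspose_mul_mul_same (msqrt A)
    rwa [(isHermitian_msqrt hA.posSemidef).eq, ← hX] at h
  have hunit : IsUnit (X + (s : ℂ) • 1) :=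
    (PosDef.posSemidef_add hXpsd (PosDef.one.smul (by exact_mod_cast hs))).isUnit
  rw [hX] at hunit hY
  have hder := hasDerivAt_trace_mul_inv_conj_exp ρ (msqrt A) K s hunit
  rw [← hY, trace_sandwich_commutator_eq_trace_mul_commutator, ← hT] at hder
  exact HasDerivAt.comp_ofReal (z := 0) (by rwa [Complex.ofReal_zero])

/-- with `X = A^{1/2}ρA^{1/2}`, `Y = (X + sI)⁻¹`,
`T = ρA^{1/2}YρY + YρYA^{1/2}ρ`, the function
`t ↦ Tr[ρ((e^{-tK}A^{1/2}e^{tK})ρ(e^{-tK}A^{1/2}e^{tK}) + sI)⁻¹]`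
is differentiable at `t = 0` with derivative `−Tr(K(TA^{1/2} − A^{1/2}T))`,
i.e. `Tr(K(A^{1/2}T − TA^{1/2}))`. -/
theorem stmt12 (n : ℕ) (hn : 0 < n)
    (A ρ : Matrix (Fin n) (Fin n) ℂ)
    (hA : A.PosDef) (hρ : ρ.PosDef)
    (s : ℝ) (hs : 0 < s)
    (K : Matrix (Fin n) (Fin n) ℂ) (hK : Kᴴ = -K)
    (X Y T : Matrix (Fin n) (Fin n) ℂ)
    (hX : X = msqrt A * ρ * msqrt A)
    (hY : Y = (X + (s : ℂ) • 1)⁻¹)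
    (hT : T = ρ * msqrt A * Y * ρ * Y + Y * ρ * Y * msqrt A * ρ) :
    HasDerivAt
      (fun t : ℝ =>
        (ρ * ((NormedSpace.exp (-(t : ℂ) • K) * msqrt A * NormedSpace.exp ((t : ℂ) • K)) * ρ *
              (NormedSpace.exp (-(t : ℂ) • K) * msqrt A * NormedSpace.exp ((t : ℂ) • K)) +
            (s : ℂ) • 1)⁻¹).trace)
      (-((K * (T * msqrt A - msqrt A * T)).trace)) 0 :=
  stmt12_general n A ρ hA hρ s hs K X Y T hX hY hT
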